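/- arXiv:2302.07771 — 8 statements merged into one kernel-verified Lean document; each statement's English description precedes it below -/
import Mathlib

section
/- Let S be a finite set of points in a metric space, let k ≥ 1 be an integer, and let d ≥ 0. If there exists a subset Y ⊆ S with |Y| ≥ k + 1 such that any two distinct points of Y are at distance greater than d, then every subset C ⊆ S with 1 ≤ |C| ≤ k satisfies r_C(S) > d/2; in particular, r*_k(S) > d/2. -/
/-- `setDist p C = min_{q ∈ C} dist p q` (as an infimum). -/
noncomputable def setDist {X : Type*} [MetricSpace X] (p : X) (C : Set X) : ℝ :=
  sInf ((dist p) '' C)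

/-- `rad S C = max_{p ∈ S} dist(p, C)`, the radius of `C` with respect to `S`. -/
noncomputable def rad {X : Type*} [MetricSpace X] (S C : Set X) : ℝ :=
  sSup ((fun p => setDist p C) '' S)

/-- `kcOpt S k = r*_k(S)`, the optimal `k`-center radius of `S`. -/
noncomputable def kcOpt {X : Type*} [MetricSpace X] (S : Set X) (k : ℕ) : ℝ :=
  sInf { r : ℝ | ∃ C : Set X, C ⊆ S ∧ C.Nonempty ∧ C.ncard ≤ k ∧ r = rad S C }

/-! If at most `k` centers covered `S` within radius `d / 2`, then by pigeonhole two of the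
`k + 1` separated points would share a nearest center `c`, and the triangle inequality through `c`
would put them within distance `d` of each other. Since `S` is finite, `r*_k(S)` is attained by
some set of centers, so the bound passes to it. -/

section

variable {X : Type*} [MetricSpace X]

theorem exists_mem_dist_eq_setDist {C : Set X} (hC : C.Finite) (hne : C.Nonempty) (p : X) :
    ∃ c ∈ C, dist p c = setDist p C :=
  (hne.image _).csInf_mem (hC.image _)

theorem setDist_le_rad {S : Set X} (hS : S.Finite) (C : Set X) {p : X} (hp : p ∈ S) :
    setDist p C ≤ rad S C :=
  le_csSup (hS.image _).bddAbove ⟨p, hp, rfl⟩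

theorem ncard_le_ncard_of_rad_le_half {S C Y : Set X} (hS : S.Finite) (hC : C.Finite)
    (hne : C.Nonempty) (hYS : Y ⊆ S) {d : ℝ} (hrad : rad S C ≤ d / 2)
    (hsep : ∀ a ∈ Y, ∀ b ∈ Y, a ≠ b → d < dist a b) :
    Y.ncard ≤ C.ncard := by
  choose nearest hnearest_mem hnearest using exists_mem_dist_eq_setDist hC hne
  have hcover : ∀ p ∈ S, dist p (nearest p) ≤ d / 2 := fun p hp =>
    (hnearest p).trans_le ((setDist_le_rad hS C hp).trans hrad)
  refine Set.ncard_le_ncard_of_injOn nearest (fun a _ => hnearest_mem a) ?_ hC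
  intro a ha b hb hab
  by_contra hne_ab
  have hab_far := hsep a ha b hb hne_ab
  have htri := dist_triangle_right a b (nearest a)
  have ha_close := hcover a (hYS ha)
  have hb_close := hcover b (hYS hb)
  rw [← hab] at hb_close
  linarith

theorem exists_rad_eq_kcOpt {S : Set X} (hS : S.Finite) (hSne : S.Nonempty) {k : ℕ}
    (hk : 1 ≤ k) : ∃ C ⊆ S, C.Nonempty ∧ C.ncard ≤ k ∧ kcOpt S k = rad S C := by
  obtain ⟨y, hy⟩ := hSne
  set R := { r : ℝ | ∃ C : Set X, C ⊆ S ∧ C.Nonempty ∧ C.ncard ≤ k ∧ r = rad S C }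
  have hR_ne : R.Nonempty :=
    ⟨rad S {y}, {y}, Set.singleton_subset_iff.2 hy, Set.singleton_nonempty y,
      by rwa [Set.ncard_singleton], rfl⟩
  have hR_fin : R.Finite := (hS.finite_subsets.image (rad S)).subset <| by
    rintro _ ⟨C, hCS, -, -, rfl⟩
    exact ⟨C, hCS, rfl⟩
  exact hR_ne.csInf_mem hR_fin

end

theorem stmt6_general {X : Type*} [MetricSpace X] (S : Set X) (hS : S.Finite)
    (k : ℕ) (hk : 1 ≤ k) (d : ℝ)
    (Y : Set X) (hYS : Y ⊆ S) (hYcard : k + 1 ≤ Y.ncard)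
    (hsep : ∀ a ∈ Y, ∀ b ∈ Y, a ≠ b → d < dist a b) :
    (∀ C : Set X, C ⊆ S → C.Nonempty → C.ncard ≤ k → d / 2 < rad S C) ∧
    d / 2 < kcOpt S k := by
  have hrad : ∀ C : Set X, C ⊆ S → C.Nonempty → C.ncard ≤ k → d / 2 < rad S C :=
    fun C hCS hCne hCk => lt_of_not_ge fun hle => by
      have := ncard_le_ncard_of_rad_le_half hS (hS.subset hCS) hCne hYS hle hsep
      omega
  have hSne : S.Nonempty := (Set.nonempty_of_ncard_ne_zero (by omega)).mono hYS
  obtain ⟨C, hCS, hCne, hCk, hopt⟩ := exists_rad_eq_kcOpt hS hSne hk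
  exact ⟨hrad, hopt ▸ hrad C hCS hCne hCk⟩

/-- If `S` contains at least `k+1` points at pairwise distance greater than `d`, then every
set of at most `k` centers has radius greater than `d/2`; in particular `r*_k(S) > d/2`. -/
theorem stmt6 {X : Type*} [MetricSpace X] (S : Set X) (hS : S.Finite)
    (k : ℕ) (hk : 1 ≤ k) (d : ℝ) (hd : 0 ≤ d)
    (Y : Set X) (hYS : Y ⊆ S) (hYcard : k + 1 ≤ Y.ncard)
    (hsep : ∀ a ∈ Y, ∀ b ∈ Y, a ≠ b → d < dist a b) :
    (∀ C : Set X, C ⊆ S → C.Nonempty → C.ncard ≤ k → d / 2 < rad S C) ∧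
    d / 2 < kcOpt S k :=
  stmt6_general S hS k hk d Y hYS hYcard hsep
end

section
/- Let S be a finite set of points in a metric space, let 1 ≤ k < |S|, let ε ≥ 0 and β ≥ 0, let T ⊆ S be a nonempty subset with r_T(S) ≤ ε · r*_k(S), and let C ⊆ T be a nonempty subset with r_C(T) ≤ β · r*_k(T). Then r_C(S) ≤ (β + (β + 1)ε) · r*_k(S). In particular, a β-approximate k-center solution computed on an (ε, k)-coreset T is a (β + O(ε))-approximate k-center solution for S. -/
/-!
Projecting through the coreset costs one triangle inequality: `r_C(S) ≤ r_T(S) + r_C(T)`.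
Moving each center of an optimal solution for `S` to its nearest point of `T` gives at most `k`
centers in `T`, so `r*_k(T) ≤ r*_k(S) + r_T(S)`.
-/

namespace KCenter

variable {X : Type*} [MetricSpace X] {S T C D : Set X} {p : X} {k : ℕ} {r : ℝ}

theorem setDist_eq_infDist (p : X) (C : Set X) : setDist p C = Metric.infDist p C := by
  rw [setDist, Metric.infDist_eq_iInf, sInf_image']

theorem rad_nonneg (S C : Set X) : 0 ≤ rad S C :=
  Real.sSup_nonneg <| by rintro _ ⟨p, -, rfl⟩; exact Real.sInf_nonneg (by
    rintro _ ⟨q, -, rfl⟩; exact dist_nonneg)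

theorem infDist_le_rad (hS : S.Finite) (hp : p ∈ S) (C : Set X) :
    Metric.infDist p C ≤ rad S C := by
  rw [← setDist_eq_infDist]
  exact le_csSup (hS.image _).bddAbove ⟨p, hp, rfl⟩

theorem rad_le_of_forall (h : ∀ p ∈ S, Metric.infDist p C ≤ r) (hr : 0 ≤ r) : rad S C ≤ r :=
  Real.sSup_le (by rintro _ ⟨p, hp, rfl⟩; exact (setDist_eq_infDist p C).trans_le (h p hp)) hr

theorem rad_mono_left (hS : S.Finite) (hTS : T ⊆ S) (C : Set X) : rad T C ≤ rad S C :=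
  rad_le_of_forall (fun _ hp ↦ infDist_le_rad hS (hTS hp) C) (rad_nonneg S C)

theorem rad_le_rad_add_rad (hS : S.Finite) (hT : T.Finite) (hTne : T.Nonempty) (C : Set X) :
    rad S C ≤ rad S T + rad T C := by
  refine rad_le_of_forall (fun p hp ↦ ?_) (add_nonneg (rad_nonneg S T) (rad_nonneg T C))
  obtain ⟨q, hqT, hpq⟩ := hT.isCompact.exists_infDist_eq_dist hTne p
  calc Metric.infDist p C ≤ Metric.infDist q C + dist p q := Metric.infDist_le_infDist_add_dist
    _ ≤ rad T C + rad S T := by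
      rw [← hpq]; exact add_le_add (infDist_le_rad hT hqT C) (infDist_le_rad hS hp T)
    _ = rad S T + rad T C := add_comm _ _

theorem exists_subset_ncard_le_rad_le (hD : D.Finite) (hDne : D.Nonempty) (hT : T.Finite)
    (hTne : T.Nonempty) :
    ∃ D' ⊆ T, D'.Nonempty ∧ D'.ncard ≤ D.ncard ∧ rad D D' ≤ rad D T := by
  choose f hfT hf using fun c ↦ hT.isCompact.exists_infDist_eq_dist hTne c
  refine ⟨f '' D, Set.image_subset_iff.2 fun c _ ↦ hfT c, hDne.image f,
    Set.ncard_image_le hD, rad_le_of_forall (fun c hc ↦ ?_) (rad_nonneg D T)⟩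
  calc Metric.infDist c (f '' D) ≤ dist c (f c) := Metric.infDist_le_dist_of_mem ⟨c, hc, rfl⟩
    _ = Metric.infDist c T := (hf c).symm
    _ ≤ rad D T := infDist_le_rad hD hc T

theorem kcOpt_le_rad (hCS : C ⊆ S) (hCne : C.Nonempty) (hCk : C.ncard ≤ k) :
    kcOpt S k ≤ rad S C :=
  csInf_le ⟨0, by rintro _ ⟨D, -, -, -, rfl⟩; exact rad_nonneg S D⟩ ⟨C, hCS, hCne, hCk, rfl⟩

theorem le_kcOpt (hSne : S.Nonempty) (hk : 1 ≤ k)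
    (h : ∀ D ⊆ S, D.Nonempty → D.ncard ≤ k → r ≤ rad S D) : r ≤ kcOpt S k := by
  obtain ⟨s, hs⟩ := hSne
  refine le_csInf ⟨rad S {s}, {s}, by simpa using hs, Set.singleton_nonempty s,
    by simpa using hk, rfl⟩ ?_
  rintro _ ⟨D, hDS, hDne, hDk, rfl⟩
  exact h D hDS hDne hDk

theorem kcOpt_le_kcOpt_add_rad (hS : S.Finite) (hTS : T ⊆ S) (hTne : T.Nonempty) (hk : 1 ≤ k) :
    kcOpt T k ≤ kcOpt S k + rad S T := by
  have hT := hS.subset hTS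
  rw [← sub_le_iff_le_add]
  refine le_kcOpt (hTne.mono hTS) hk fun D hDS hDne hDk ↦ ?_
  have hD := hS.subset hDS
  obtain ⟨D', hD'T, hD'ne, hD'k, hDD'⟩ := exists_subset_ncard_le_rad_le hD hDne hT hTne
  have : kcOpt T k ≤ rad S D + rad S T :=
    calc kcOpt T k ≤ rad T D' := kcOpt_le_rad hD'T hD'ne (hD'k.trans hDk)
      _ ≤ rad T D + rad D D' := rad_le_rad_add_rad hT hD hDne D'
      _ ≤ rad S D + rad S T :=
        add_le_add (rad_mono_left hS hTS D) (hDD'.trans (rad_mono_left hS hDS T))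
  linarith

end KCenter

open KCenter in
theorem stmt8_general {X : Type*} [MetricSpace X] (S : Set X) (hS : S.Finite)
    (k : ℕ) (hk1 : 1 ≤ k)
    (ε β : ℝ) (hβ : 0 ≤ β)
    (T : Set X) (hTS : T ⊆ S) (hTne : T.Nonempty)
    (hcore : rad S T ≤ ε * kcOpt S k)
    (C : Set X)
    (happrox : rad T C ≤ β * kcOpt T k) :
    rad S C ≤ (β + (β + 1) * ε) * kcOpt S k := by
  have hCT : rad T C ≤ β * (kcOpt S k + rad S T) :=
    happrox.trans (mul_le_mul_of_nonneg_left (kcOpt_le_kcOpt_add_rad hS hTS hTne hk1) hβ)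
  have hST : (β + 1) * rad S T ≤ (β + 1) * (ε * kcOpt S k) :=
    mul_le_mul_of_nonneg_left hcore (by linarith)
  have := rad_le_rad_add_rad hS (hS.subset hTS) hTne C
  linarith

/-- A `β`-approximate `k`-center solution `C` computed on an `(ε,k)`-coreset `T` of `S`
satisfies `r_C(S) ≤ (β + (β+1)ε)·r*_k(S)`. -/
theorem stmt8 {X : Type*} [MetricSpace X] (S : Set X) (hS : S.Finite)
    (k : ℕ) (hk1 : 1 ≤ k) (hk2 : k < S.ncard)
    (ε β : ℝ) (hε : 0 ≤ ε) (hβ : 0 ≤ β)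
    (T : Set X) (hTS : T ⊆ S) (hTne : T.Nonempty)
    (hcore : rad S T ≤ ε * kcOpt S k)
    (C : Set X) (hCT : C ⊆ T) (hCne : C.Nonempty)
    (happrox : rad T C ≤ β * kcOpt T k) :
    rad S C ≤ (β + (β + 1) * ε) * kcOpt S k :=
  stmt8_general S hS k hk1 ε β hβ T hTS hTne hcore C happrox
end

section
/- Let (T_ℓ, par_ℓ) be a cover tree on a finite set S in a metric space (U, dist), and let p ∈ U. Then for every level ℓ with ℓ_min ≤ ℓ ≤ ℓ_max and every node u ∈ T_ℓ ∖ Q^p_ℓ, one has dist(p, u) > 2^{ℓ+1}. -/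
/-! Downward induction on the level. If `u ∈ T ℓ ∖ Q ℓ` were within `2^(ℓ+1)` of `p`, then its
parent could not lie in `Q (ℓ+1)`, so by induction the parent is farther than `2^(ℓ+2)` from `p`;
but the parent is within `2^(ℓ+1)` of `u`, contradicting the triangle inequality. -/

/-- A cover tree on a finite nonempty set `S` in a metric space: for each level
`ℓ ∈ [lmin, lmax]` a finite set `T ℓ ⊆ S` (with `T lmax` a singleton), and for each
`ℓ ∈ [lmin, lmax)` a parent map `par ℓ : T ℓ → T (ℓ+1)`, such that
(1) `T (ℓ+1) ⊆ T ℓ`; (2) `dist u (par ℓ u) ≤ 2^(ℓ+1)`; (3) distinct points of `T ℓ` are at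
distance greater than `2^ℓ`. -/
structure CoverTree (X : Type*) [MetricSpace X] (S : Set X) where
  lmin : ℤ
  lmax : ℤ
  lmin_le_lmax : lmin ≤ lmax
  T : ℤ → Set X
  T_subset : ∀ ℓ : ℤ, lmin ≤ ℓ → ℓ ≤ lmax → T ℓ ⊆ S
  T_finite : ∀ ℓ : ℤ, lmin ≤ ℓ → ℓ ≤ lmax → (T ℓ).Finite
  T_top_singleton : ∃ x : X, T lmax = {x}
  par : ℤ → X → X
  nested : ∀ ℓ : ℤ, lmin ≤ ℓ → ℓ < lmax → T (ℓ + 1) ⊆ T ℓ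
  par_mem : ∀ ℓ : ℤ, lmin ≤ ℓ → ℓ < lmax → ∀ u ∈ T ℓ, par ℓ u ∈ T (ℓ + 1)
  par_dist : ∀ ℓ : ℤ, lmin ≤ ℓ → ℓ < lmax → ∀ u ∈ T ℓ, dist u (par ℓ u) ≤ (2 : ℝ) ^ (ℓ + 1)
  separated : ∀ ℓ : ℤ, lmin ≤ ℓ → ℓ ≤ lmax →
    ∀ u ∈ T ℓ, ∀ v ∈ T ℓ, u ≠ v → (2 : ℝ) ^ ℓ < dist u v

theorem CoverTree.zpow_lt_dist_of_zpow_lt_dist_par {X : Type*} [MetricSpace X] {S : Set X}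
    (ct : CoverTree X S) {ℓ : ℤ} (hmin : ct.lmin ≤ ℓ) (hmax : ℓ < ct.lmax) {u : X}
    (hu : u ∈ ct.T ℓ) {p : X} (h : (2 : ℝ) ^ (ℓ + 1 + 1) < dist p (ct.par ℓ u)) :
    (2 : ℝ) ^ (ℓ + 1) < dist p u := by
  have hpar := ct.par_dist ℓ hmin hmax u hu
  have hdouble : (2 : ℝ) ^ (ℓ + 1 + 1) = 2 * 2 ^ (ℓ + 1) := by
    rw [zpow_add_one₀ two_ne_zero, mul_comm]
  linarith [dist_triangle p u (ct.par ℓ u)]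

/-- For every point `p` and level `ℓ ∈ [lmin, lmax]`, every node `u ∈ T ℓ ∖ Q^p_ℓ`
satisfies `dist p u > 2^(ℓ+1)`; here `Q` is the family of cover sets for `p`, given by
`Q lmax = T lmax` and the downward recursion
`Q ℓ = {u ∈ T ℓ | par ℓ u ∈ Q (ℓ+1) ∧ dist u p ≤ 2^(ℓ+1)}`. -/
theorem stmt9 {X : Type*} [MetricSpace X] {S : Set X} (ct : CoverTree X S) (p : X)
    (Q : ℤ → Set X)
    (hQtop : Q ct.lmax = ct.T ct.lmax)
    (hQrec : ∀ ℓ : ℤ, ct.lmin ≤ ℓ → ℓ < ct.lmax →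
      Q ℓ = {u ∈ ct.T ℓ | ct.par ℓ u ∈ Q (ℓ + 1) ∧ dist u p ≤ (2 : ℝ) ^ (ℓ + 1)}) :
    ∀ ℓ : ℤ, ct.lmin ≤ ℓ → ℓ ≤ ct.lmax →
      ∀ u ∈ ct.T ℓ \ Q ℓ, (2 : ℝ) ^ (ℓ + 1) < dist p u := by
  intro ℓ hmin hmax
  induction ℓ, hmax using Int.leInductionDown with
  | base => exact fun u hu ↦ absurd (hQtop ▸ hu.1) hu.2
  | pred n _ ih =>
    obtain ⟨m, rfl⟩ : ∃ m, n = m + 1 := ⟨n - 1, by ring⟩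
    rw [add_sub_cancel_right] at hmin ⊢
    rintro u ⟨huT, huQ⟩
    have hm : m < ct.lmax := by omega
    by_contra! hclose
    have hparQ : ct.par m u ∉ Q (m + 1) := fun hQ ↦
      huQ (hQrec m hmin hm ▸ ⟨huT, hQ, dist_comm u p ▸ hclose⟩)
    have hfar := ih (by omega) _ ⟨ct.par_mem m hmin hm u huT, hparQ⟩
    exact hclose.not_gt (ct.zpow_lt_dist_of_zpow_lt_dist_par hmin hm huT hfar)
end

section
/- Let (T_ℓ, par_ℓ) be a cover tree on a finite set S in a metric space (U, dist) of doubling dimension D. Then for every point p ∈ U and every level ℓ with ℓ_min ≤ ℓ ≤ ℓ_max, the cover set satisfies |Q^p_ℓ| ≤ 4^D. -/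
/-- A metric space has doubling dimension `D` if every closed ball of radius `ρ > 0`
is contained in the union of at most `2^D` closed balls of radius `ρ/2`. -/
def HasDoublingDim (X : Type*) [MetricSpace X] (D : ℕ) : Prop :=
  ∀ (x : X) (ρ : ℝ), 0 < ρ → ∃ F : Finset X,
    F.card ≤ 2 ^ D ∧ Metric.closedBall x ρ ⊆ ⋃ c ∈ F, Metric.closedBall c (ρ / 2)

open Metric

theorem ncard_le_card_of_subset_iUnion_closedBall {X : Type*} [PseudoMetricSpace X]
    {A : Set X} {F : Finset X} {r : ℝ} (hcover : A ⊆ ⋃ c ∈ F, closedBall c r)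
    (hsep : A.Pairwise fun u v => 2 * r < dist u v) : A.ncard ≤ F.card := by
  have hcenter : ∀ a ∈ A, ∃ c ∈ F, dist a c ≤ r := fun a ha => by
    simpa only [Set.mem_iUnion, mem_closedBall, exists_prop] using hcover ha
  choose! center hcenter_mem hcenter_dist using hcenter
  have hinj : Set.InjOn center A := by
    intro u hu v hv huv
    by_contra hne
    have : dist u v ≤ 2 * r := calc
      dist u v ≤ dist u (center u) + dist v (center v) := by
        rw [huv]; exact dist_triangle_right _ _ _
      _ ≤ 2 * r := by linarith [hcenter_dist u hu, hcenter_dist v hv]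
    exact (hsep hu hv hne).not_ge this
  simpa using Set.ncard_le_ncard_of_injOn center hcenter_mem hinj F.finite_toSet

theorem HasDoublingDim.exists_cover_closedBall_quarter {X : Type*} [MetricSpace X] {D : ℕ}
    (hD : HasDoublingDim X D) (x : X) {ρ : ℝ} (hρ : 0 < ρ) :
    ∃ F : Finset X, F.card ≤ 4 ^ D ∧ closedBall x ρ ⊆ ⋃ c ∈ F, closedBall c (ρ / 4) := by
  classical
  obtain ⟨F, hFcard, hFcover⟩ := hD x ρ hρ
  choose G hGcard hGcover using fun c : X => hD c (ρ / 2) (half_pos hρ)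
  refine ⟨F.biUnion G, ?_, fun y hy => ?_⟩
  · calc (F.biUnion G).card ≤ F.card * 2 ^ D :=
          Finset.card_biUnion_le_card_mul _ _ _ fun c _ => hGcard c
      _ ≤ 2 ^ D * 2 ^ D := Nat.mul_le_mul_right _ hFcard
      _ = 4 ^ D := by rw [← mul_pow]; norm_num
  · obtain ⟨c, hc, hyc⟩ := Set.mem_iUnion₂.1 (hFcover hy)
    obtain ⟨d, hd, hyd⟩ := Set.mem_iUnion₂.1 (hGcover c hyc)
    rw [div_div, show (2 : ℝ) * 2 = 4 by norm_num] at hyd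
    exact Set.mem_iUnion₂.2 ⟨d, Finset.mem_biUnion.2 ⟨c, hc, hd⟩, hyd⟩

theorem HasDoublingDim.ncard_le_of_subset_closedBall {X : Type*} [MetricSpace X] {D : ℕ}
    (hD : HasDoublingDim X D) {A : Set X} {x : X} {ρ : ℝ} (hρ : 0 < ρ)
    (hA : A ⊆ closedBall x ρ) (hsep : A.Pairwise fun u v => ρ / 2 < dist u v) :
    A.ncard ≤ 4 ^ D := by
  obtain ⟨F, hFcard, hFcover⟩ := hD.exists_cover_closedBall_quarter x hρ
  have hsep' : A.Pairwise fun u v => 2 * (ρ / 4) < dist u v := by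
    convert hsep using 4; ring
  exact (ncard_le_card_of_subset_iUnion_closedBall (hA.trans hFcover) hsep').trans hFcard

theorem CoverTree.pairwise_lt_dist {X : Type*} [MetricSpace X] {S : Set X} (ct : CoverTree X S)
    {ℓ : ℤ} (hlo : ct.lmin ≤ ℓ) (hhi : ℓ ≤ ct.lmax) :
    (ct.T ℓ).Pairwise fun u v => (2 : ℝ) ^ ℓ < dist u v :=
  fun u hu v hv hne => ct.separated ℓ hlo hhi u hu v hv hne

theorem CoverTree.ncard_T_lmax {X : Type*} [MetricSpace X] {S : Set X} (ct : CoverTree X S) :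
    (ct.T ct.lmax).ncard = 1 := by
  obtain ⟨x, hx⟩ := ct.T_top_singleton
  rw [hx, Set.ncard_singleton]

/-- In a metric space of doubling dimension `D`, for every point `p` and every level
`ℓ ∈ [lmin, lmax]`, the cover set satisfies `|Q^p_ℓ| ≤ 4^D`. -/
theorem stmt10 {X : Type*} [MetricSpace X] {S : Set X} {D : ℕ} (hD : HasDoublingDim X D)
    (ct : CoverTree X S) (p : X)
    (Q : ℤ → Set X)
    (hQtop : Q ct.lmax = ct.T ct.lmax)
    (hQrec : ∀ ℓ : ℤ, ct.lmin ≤ ℓ → ℓ < ct.lmax →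
      Q ℓ = {u ∈ ct.T ℓ | ct.par ℓ u ∈ Q (ℓ + 1) ∧ dist u p ≤ (2 : ℝ) ^ (ℓ + 1)}) :
    ∀ ℓ : ℤ, ct.lmin ≤ ℓ → ℓ ≤ ct.lmax → (Q ℓ).ncard ≤ 4 ^ D := by
  intro ℓ hlo hhi
  rcases hhi.eq_or_lt with rfl | hlt
  · rw [hQtop, ct.ncard_T_lmax]
    exact Nat.one_le_pow _ _ (by norm_num)
  · have hQT : Q ℓ ⊆ ct.T ℓ := fun u hu => by rw [hQrec ℓ hlo hlt] at hu; exact hu.1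
    have hQball : Q ℓ ⊆ closedBall p ((2 : ℝ) ^ (ℓ + 1)) := fun u hu => by
      rw [hQrec ℓ hlo hlt] at hu; exact mem_closedBall.2 hu.2.2
    have hhalf : (2 : ℝ) ^ (ℓ + 1) / 2 = 2 ^ ℓ := by
      rw [zpow_add_one₀ two_ne_zero, mul_div_cancel_right₀ _ two_ne_zero]
    refine hD.ncard_le_of_subset_closedBall (zpow_pos two_pos _) hQball ?_
    rw [hhalf]
    exact (ct.pairwise_lt_dist hlo hhi).mono hQT
end

section
/- Correctness of the insertion level: let (T_ℓ, par_ℓ) be a cover tree on a finite set S in a metric space (U, dist), let p ∈ U, and let ℓ be a level with ℓ_min ≤ ℓ < ℓ_max such that (a) dist(p, u) > 2^ℓ for every u ∈ Q^p_ℓ, and (b) there exists v ∈ Q^p_{ℓ+1} with dist(p, v) ≤ 2^{ℓ+1}. Then dist(p, u) > 2^ℓ for EVERY u ∈ T_ℓ (so that T_ℓ ∪ {p} satisfies the level-ℓ separation property dist > 2^ℓ between distinct points), and v ∈ T_{ℓ+1} satisfies dist(p, v) ≤ 2^{ℓ+1} (so that v is a valid parent for p at level ℓ). -/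
namespace CoverTree

variable {X : Type*} [MetricSpace X] {S : Set X}

structure IsCoverSets (ct : CoverTree X S) (p : X) (Q : ℤ → Set X) : Prop where
  eq_top : Q ct.lmax = ct.T ct.lmax
  eq_of_lt_lmax : ∀ ℓ : ℤ, ct.lmin ≤ ℓ → ℓ < ct.lmax →
    Q ℓ = {u ∈ ct.T ℓ | ct.par ℓ u ∈ Q (ℓ + 1) ∧ dist u p ≤ (2 : ℝ) ^ (ℓ + 1)}

variable {ct : CoverTree X S} {p : X} {Q : ℤ → Set X}

theorem dist_par_le_of_dist_le {ℓ : ℤ} (h1 : ct.lmin ≤ ℓ) (h2 : ℓ < ct.lmax) {u : X}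
    (hu : u ∈ ct.T ℓ) (hd : dist u p ≤ (2 : ℝ) ^ (ℓ + 1)) :
    dist (ct.par ℓ u) p ≤ (2 : ℝ) ^ (ℓ + 1 + 1) :=
  calc dist (ct.par ℓ u) p ≤ dist u (ct.par ℓ u) + dist u p := dist_triangle_left _ _ _
    _ ≤ (2 : ℝ) ^ (ℓ + 1) + (2 : ℝ) ^ (ℓ + 1) := add_le_add (ct.par_dist ℓ h1 h2 u hu) hd
    _ = (2 : ℝ) ^ (ℓ + 1 + 1) := by rw [zpow_add_one₀ two_ne_zero (ℓ + 1)]; ring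

namespace IsCoverSets

theorem subset_T (hQ : ct.IsCoverSets p Q) {ℓ : ℤ} (h1 : ct.lmin ≤ ℓ) (h2 : ℓ ≤ ct.lmax) :
    Q ℓ ⊆ ct.T ℓ := by
  rcases h2.lt_or_eq with h2 | rfl
  · rw [hQ.eq_of_lt_lmax ℓ h1 h2]
    exact fun u hu ↦ hu.1
  · exact hQ.eq_top.subset

theorem mem_of_dist_le (hQ : ct.IsCoverSets p Q) {ℓ : ℤ} (h1 : ct.lmin ≤ ℓ) (h2 : ℓ ≤ ct.lmax)
    {u : X} (hu : u ∈ ct.T ℓ) (hd : dist u p ≤ (2 : ℝ) ^ (ℓ + 1)) : u ∈ Q ℓ := by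
  induction ℓ, h2 using Int.leInductionDown generalizing u with
  | base => rwa [hQ.eq_top]
  | pred k hk ih =>
    have hlt : k - 1 < ct.lmax := by omega
    rw [hQ.eq_of_lt_lmax _ h1 hlt]
    refine ⟨hu, ?_, hd⟩
    have hpar := ct.par_mem _ h1 hlt u hu
    have hpd := dist_par_le_of_dist_le h1 hlt hu hd
    rw [sub_add_cancel] at hpar hpd ⊢
    exact ih (by omega) hpar hpd

end IsCoverSets

end CoverTree

/-- Correctness of the insertion level: if (a) `dist p u > 2^ℓ` for every `u ∈ Q^p_ℓ`,
and (b) some `v ∈ Q^p_{ℓ+1}` satisfies `dist p v ≤ 2^(ℓ+1)`, then `dist p u > 2^ℓ` for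
every `u ∈ T ℓ` (so `T ℓ ∪ {p}` satisfies the level-`ℓ` separation property), and
`v ∈ T (ℓ+1)` with `dist p v ≤ 2^(ℓ+1)` (so `v` is a valid parent for `p` at level `ℓ`). -/
theorem stmt14 {X : Type*} [MetricSpace X] {S : Set X} (ct : CoverTree X S) (p : X)
    (Q : ℤ → Set X)
    (hQtop : Q ct.lmax = ct.T ct.lmax)
    (hQrec : ∀ ℓ : ℤ, ct.lmin ≤ ℓ → ℓ < ct.lmax →
      Q ℓ = {u ∈ ct.T ℓ | ct.par ℓ u ∈ Q (ℓ + 1) ∧ dist u p ≤ (2 : ℝ) ^ (ℓ + 1)})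
    (ℓ : ℤ) (h1 : ct.lmin ≤ ℓ) (h2 : ℓ < ct.lmax)
    (ha : ∀ u ∈ Q ℓ, (2 : ℝ) ^ ℓ < dist p u)
    (v : X) (hv : v ∈ Q (ℓ + 1)) (hvd : dist p v ≤ (2 : ℝ) ^ (ℓ + 1)) :
    (∀ u ∈ ct.T ℓ, (2 : ℝ) ^ ℓ < dist p u) ∧
    v ∈ ct.T (ℓ + 1) ∧ dist p v ≤ (2 : ℝ) ^ (ℓ + 1) := by
  have hQ : ct.IsCoverSets p Q := ⟨hQtop, hQrec⟩
  refine ⟨fun u hu ↦ ?_, hQ.subset_T (by omega) (by omega) hv, hvd⟩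
  by_contra! hle
  have hd : dist u p ≤ (2 : ℝ) ^ (ℓ + 1) := by
    rw [dist_comm]
    exact hle.trans (zpow_le_zpow_right₀ one_le_two (by omega))
  exact (ha u (hQ.mem_of_dist_le h1 h2.le hu hd)).not_ge hle
end

section
/- Descendant count bound: let (T_ℓ, par_ℓ) be a cover tree on a finite set S in a metric space of doubling dimension D. For levels ℓ ≤ ℓ' (both in [ℓ_min, ℓ_max]) and a node v ∈ T_{ℓ'}, the set of descendants of v at level ℓ, namely { u ∈ T_ℓ : (par_{ℓ'-1} ∘ ⋯ ∘ par_ℓ)(u) = v }, has cardinality at most 2^{(ℓ' − ℓ + 2)·D}. -/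
/-!
Climbing from level `ℓ` to level `ℓ'` moves a point by at most `2^(ℓ+1) + ⋯ + 2^ℓ' < 2^(ℓ'+1)`,
so the descendants of `v` at level `ℓ` lie in the ball of radius `2^(ℓ'+1)` around `v`, and they
are `2^ℓ`-separated. Iterating the doubling property `ℓ' - ℓ + 2` times covers that ball by
`2^((ℓ'-ℓ+2)·D)` balls of radius `2^(ℓ-1)`, each of which contains at most one descendant.
-/

open Metric

/-- `ancAux par ℓ n u` is the ancestor of `u` obtained by composing the parent maps
`par (ℓ+n-1) ∘ ⋯ ∘ par ℓ`, i.e. climbing `n` levels starting from level `ℓ`. -/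
def ancAux {X : Type*} (par : ℤ → X → X) (ℓ : ℤ) : ℕ → X → X
  | 0, u => u
  | n + 1, u => par (ℓ + n) (ancAux par ℓ n u)

namespace HasDoublingDim

variable {X : Type*} [MetricSpace X] {D : ℕ}

lemma exists_cover_closedBall_pow (hD : HasDoublingDim X D) (x : X) {ρ : ℝ} (hρ : 0 < ρ)
    (m : ℕ) : ∃ F : Finset X,
      F.card ≤ 2 ^ (D * m) ∧ closedBall x ρ ⊆ ⋃ c ∈ F, closedBall c (ρ / 2 ^ m) := by
  classical
  induction m with
  | zero => exact ⟨{x}, by simp, by simp⟩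
  | succ m ih =>
    obtain ⟨F, hFcard, hFcov⟩ := ih
    choose G hGcard hGcov using fun c : X => hD c (ρ / 2 ^ m) (by positivity)
    refine ⟨F.biUnion G, ?_, ?_⟩
    · calc (F.biUnion G).card ≤ ∑ c ∈ F, (G c).card := Finset.card_biUnion_le
        _ ≤ F.card * 2 ^ D := Finset.sum_le_card_nsmul _ _ _ fun c _ => hGcard c
        _ ≤ 2 ^ (D * m) * 2 ^ D := Nat.mul_le_mul_right _ hFcard
        _ = 2 ^ (D * (m + 1)) := by ring
    · intro y hy
      obtain ⟨c, hc, hyc⟩ := Set.mem_iUnion₂.mp (hFcov hy)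
      obtain ⟨c', hc', hyc'⟩ := Set.mem_iUnion₂.mp (hGcov c hyc)
      refine Set.mem_iUnion₂.mpr ⟨c', Finset.mem_biUnion.mpr ⟨c, hc, hc'⟩, ?_⟩
      rwa [pow_succ, ← div_div]

lemma ncard_le_of_pairwise_lt_dist (hD : HasDoublingDim X D) {x : X} {ρ : ℝ} (hρ : 0 < ρ)
    (m : ℕ) {P : Set X} (hP : P ⊆ closedBall x ρ)
    (hsep : P.Pairwise fun u u' => 2 * (ρ / 2 ^ m) < dist u u') :
    P.ncard ≤ 2 ^ (D * m) := by
  obtain ⟨F, hFcard, hFcov⟩ := hD.exists_cover_closedBall_pow x hρ m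
  have hcenter : ∀ u ∈ P, ∃ c ∈ F, dist u c ≤ ρ / 2 ^ m := fun u hu => by
    simpa using hFcov (hP hu)
  choose! f hfF hfu using hcenter
  have hinj : Set.InjOn f P := by
    intro u hu u' hu' hf
    by_contra hne
    refine (hsep hu hu' hne).not_ge ?_
    calc dist u u' ≤ dist u (f u) + dist u' (f u') := by rw [hf]; exact dist_triangle_right _ _ _
      _ ≤ 2 * (ρ / 2 ^ m) := by linarith [hfu u hu, hfu u' hu']
  calc P.ncard ≤ (F : Set X).ncard := Set.ncard_le_ncard_of_injOn f hfF hinj F.finite_toSet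
    _ = F.card := Set.ncard_coe_finset F
    _ ≤ 2 ^ (D * m) := hFcard

end HasDoublingDim

namespace CoverTree

variable {X : Type*} [MetricSpace X] {S : Set X} (ct : CoverTree X S)

lemma ancAux_mem {ℓ : ℤ} (hℓ : ct.lmin ≤ ℓ) {u : X} (hu : u ∈ ct.T ℓ) (n : ℕ)
    (hn : ℓ + n ≤ ct.lmax) : ancAux ct.par ℓ n u ∈ ct.T (ℓ + n) := by
  induction n with
  | zero => simpa [ancAux] using hu
  | succ n ih =>
    have h := ct.par_mem (ℓ + n) (by omega) (by omega) _ (ih (by omega))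
    rwa [Nat.cast_succ, ← add_assoc]

lemma dist_ancAux_add_le {ℓ : ℤ} (hℓ : ct.lmin ≤ ℓ) {u : X} (hu : u ∈ ct.T ℓ) (n : ℕ)
    (hn : ℓ + n ≤ ct.lmax) :
    dist u (ancAux ct.par ℓ n u) + 2 ^ (ℓ + 1) ≤ (2 : ℝ) ^ (ℓ + n + 1) := by
  induction n with
  | zero => simp [ancAux]
  | succ n ih =>
    have hstep := ct.par_dist (ℓ + n) (by omega) (by omega) _ (ct.ancAux_mem hℓ hu n (by omega))
    have hpow : (2 : ℝ) ^ (ℓ + (n + 1 : ℕ) + 1) = 2 ^ (ℓ + n + 1) + 2 ^ (ℓ + n + 1) := by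
      rw [Nat.cast_succ, ← add_assoc, zpow_add_one₀ two_ne_zero]; ring
    rw [hpow, ancAux]
    linarith [ih (by omega),
      dist_triangle u (ancAux ct.par ℓ n u) (ct.par (ℓ + n) (ancAux ct.par ℓ n u))]

lemma descendants_subset_closedBall {ℓ : ℤ} (hℓ : ct.lmin ≤ ℓ) (n : ℕ)
    (hn : ℓ + n ≤ ct.lmax) (v : X) :
    {u ∈ ct.T ℓ | ancAux ct.par ℓ n u = v} ⊆ closedBall v ((2 : ℝ) ^ (ℓ + n + 1)) := by
  rintro u ⟨hu, rfl⟩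
  rw [mem_closedBall]
  linarith [ct.dist_ancAux_add_le hℓ hu n hn, zpow_pos (two_pos : (0 : ℝ) < 2) (ℓ + 1)]

end CoverTree

lemma two_mul_zpow_div_pow (ℓ : ℤ) (n : ℕ) :
    2 * ((2 : ℝ) ^ (ℓ + n + 1) / 2 ^ (n + 2)) = 2 ^ ℓ := by
  rw [zpow_add_one₀ two_ne_zero, zpow_add₀ two_ne_zero, zpow_natCast]
  field_simp
  ring

theorem stmt16_general {X : Type*} [MetricSpace X] {S : Set X} {D : ℕ} (hD : HasDoublingDim X D)
    (ct : CoverTree X S)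
    (ℓ ℓ' : ℤ) (h1 : ct.lmin ≤ ℓ) (h2 : ℓ ≤ ℓ') (h3 : ℓ' ≤ ct.lmax)
    (v : X) :
    ({u ∈ ct.T ℓ | ancAux ct.par ℓ (ℓ' - ℓ).toNat u = v}).ncard
      ≤ 2 ^ (((ℓ' - ℓ).toNat + 2) * D) := by
  set n := (ℓ' - ℓ).toNat
  have hn : ℓ + n = ℓ' := by omega
  rw [mul_comm]
  refine hD.ncard_le_of_pairwise_lt_dist (by positivity) (n + 2)
    (ct.descendants_subset_closedBall h1 n (by omega) v) ?_
  intro u hu u' hu' hne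
  rw [two_mul_zpow_div_pow]
  exact ct.separated ℓ h1 (by omega) u hu.1 u' hu'.1 hne

/-- Descendant count bound: in a metric space of doubling dimension `D`, for levels
`ℓ ≤ ℓ'` in `[lmin, lmax]` and `v ∈ T ℓ'`, the set of descendants of `v` at level `ℓ`
has cardinality at most `2^{(ℓ'−ℓ+2)·D}`. -/
theorem stmt16 {X : Type*} [MetricSpace X] {S : Set X} {D : ℕ} (hD : HasDoublingDim X D)
    (ct : CoverTree X S)
    (ℓ ℓ' : ℤ) (h1 : ct.lmin ≤ ℓ) (h2 : ℓ ≤ ℓ') (h3 : ℓ' ≤ ct.lmax)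
    (v : X) (hv : v ∈ ct.T ℓ') :
    ({u ∈ ct.T ℓ | ancAux ct.par ℓ (ℓ' - ℓ).toNat u = v}).ncard
      ≤ 2 ^ (((ℓ' - ℓ).toNat + 2) * D) :=
  stmt16_general hD ct ℓ ℓ' h1 h2 h3 v
end

section
/- Coreset size bound: let (T_ℓ, par_ℓ) be a cover tree on a finite set S in a metric space of doubling dimension D, let k ≥ 1, and let ℓ(k) be a level with |T_{ℓ(k)}| ≤ k. Let 0 < ε ≤ 8 and suppose ℓ* = ℓ(k) − ⌈log₂(8/ε)⌉ satisfies ℓ* ≥ ℓ_min. Then |T_{ℓ*}| ≤ k · 2^{(⌈log₂(8/ε)⌉ + 2)·D} ≤ k · (64/ε)^D. -/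
/-! Every point of `T ℓ*` lies within `2^(ℓk+1)` of an ancestor in `T ℓk`, the parent distances
forming a geometric series. Halving these `|T ℓk| ≤ k` balls `m + 2` times, with
`m = ⌈log₂(8/ε)⌉`, covers `T ℓ*` by `k · 2^((m+2)D)` balls of radius `2^(ℓ*-1)`, and since the
points of `T ℓ*` are `2^ℓ*`-separated each of these balls contains at most one of them. Finally
`2^m < 16/ε`, so `2^(m+2) < 64/ε`. -/

open Metric

lemma HasDoublingDim.exists_finset_cover_pow {X : Type*} [MetricSpace X] {D : ℕ}
    (hD : HasDoublingDim X D) (j : ℕ) (x : X) {ρ : ℝ} (hρ : 0 < ρ) :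
    ∃ F : Finset X, F.card ≤ 2 ^ (j * D) ∧
      closedBall x ρ ⊆ ⋃ c ∈ F, closedBall c (ρ / 2 ^ j) := by
  classical
  induction j with
  | zero => exact ⟨{x}, by simp, by simp⟩
  | succ j ih =>
    obtain ⟨F, hF, hcov⟩ := ih
    choose G hG hGcov using fun c : X => hD c (ρ / 2 ^ j) (by positivity)
    refine ⟨F.biUnion G, ?_, ?_⟩
    · calc (F.biUnion G).card ≤ ∑ c ∈ F, (G c).card := Finset.card_biUnion_le
        _ ≤ F.card * 2 ^ D := Finset.sum_le_card_nsmul _ _ _ fun c _ => hG c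
        _ ≤ 2 ^ (j * D) * 2 ^ D := Nat.mul_le_mul_right _ hF
        _ = 2 ^ ((j + 1) * D) := by rw [← pow_add, add_mul, one_mul]
    · intro y hy
      obtain ⟨c, hc, hyc⟩ := Set.mem_iUnion₂.1 (hcov hy)
      obtain ⟨c', hc', hyc'⟩ := Set.mem_iUnion₂.1 (hGcov c hyc)
      refine Set.mem_iUnion₂.2 ⟨c', Finset.mem_biUnion.2 ⟨c, hc, hc'⟩, ?_⟩
      rwa [pow_succ, ← div_div]

lemma ncard_le_card_of_forall_exists_dist_le {X : Type*} [MetricSpace X] {s : Set X}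
    {G : Finset X} {r : ℝ} (hcov : ∀ u ∈ s, ∃ c ∈ G, dist u c ≤ r)
    (hsep : ∀ u ∈ s, ∀ v ∈ s, u ≠ v → 2 * r < dist u v) :
    s.ncard ≤ G.card := by
  choose! f hfG hf using hcov
  have hinj : Set.InjOn f s := by
    intro u hu v hv huv
    by_contra hne
    have hclose : dist u v ≤ 2 * r :=
      calc dist u v ≤ dist u (f u) + dist (f v) v := by rw [huv]; exact dist_triangle _ _ _
        _ ≤ 2 * r := by linarith [hf u hu, dist_comm (f v) v ▸ hf v hv]
    linarith [hsep u hu v hv hne]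
  simpa using Set.ncard_le_ncard_of_injOn f hfG hinj G.finite_toSet

/-- Each of the `R/2^j`-balls covering the `R`-neighbourhood of `C` contains at most one
point of `s`. -/
theorem HasDoublingDim.ncard_le_of_separated {X : Type*} [MetricSpace X] {D : ℕ}
    (hD : HasDoublingDim X D) {C s : Set X} (hC : C.Finite) {R : ℝ} (hR : 0 < R) (j : ℕ)
    (hcov : ∀ u ∈ s, ∃ v ∈ C, dist u v ≤ R)
    (hsep : ∀ u ∈ s, ∀ v ∈ s, u ≠ v → 2 * (R / 2 ^ j) < dist u v) :
    s.ncard ≤ C.ncard * 2 ^ (j * D) := by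
  classical
  choose F hFcard hFcov using fun v : X => hD.exists_finset_cover_pow j v hR
  calc s.ncard ≤ (hC.toFinset.biUnion F).card := by
        refine ncard_le_card_of_forall_exists_dist_le (fun u hu => ?_) hsep
        obtain ⟨v, hv, huv⟩ := hcov u hu
        obtain ⟨c, hc, huc⟩ := Set.mem_iUnion₂.1 (hFcov v (mem_closedBall.2 huv))
        exact ⟨c, Finset.mem_biUnion.2 ⟨v, hC.mem_toFinset.2 hv, hc⟩, mem_closedBall.1 huc⟩
    _ ≤ hC.toFinset.card * 2 ^ (j * D) :=
        Finset.card_biUnion_le.trans (Finset.sum_le_card_nsmul _ _ _ fun c _ => hFcard c)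
    _ = C.ncard * 2 ^ (j * D) := by rw [Set.ncard_eq_toFinset_card C hC]

namespace CoverTree

variable {X : Type*} [MetricSpace X] {S : Set X} (ct : CoverTree X S)

/-- Following parent maps up from level `ℓ'` to level `ℓ` travels at most
`2^(ℓ'+1) + ⋯ + 2^ℓ = 2^(ℓ+1) - 2^(ℓ'+1)`. -/
lemma exists_mem_dist_le_sub {ℓ : ℤ} (hℓ : ℓ ≤ ct.lmax) :
    ∀ ℓ' ≤ ℓ, ct.lmin ≤ ℓ' → ∀ u ∈ ct.T ℓ',
      ∃ v ∈ ct.T ℓ, dist u v ≤ (2 : ℝ) ^ (ℓ + 1) - (2 : ℝ) ^ (ℓ' + 1) := by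
  intro ℓ' hℓ'
  induction ℓ', hℓ' using Int.leInductionDown with
  | base => exact fun _ u hu => ⟨u, hu, by simp⟩
  | pred n hn ih =>
    intro hmin u hu
    have hlt : n - 1 < ct.lmax := by omega
    have hpar := ct.par_mem _ hmin hlt u hu
    have hdist := ct.par_dist _ hmin hlt u hu
    rw [sub_add_cancel] at hpar hdist
    obtain ⟨v, hv, hpv⟩ := ih (by omega) _ hpar
    refine ⟨v, hv, ?_⟩
    have hdouble : (2 : ℝ) ^ (n + 1) = 2 * 2 ^ n := by rw [zpow_add_one₀ two_ne_zero, mul_comm]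
    calc dist u v ≤ dist u (ct.par (n - 1) u) + dist (ct.par (n - 1) u) v := dist_triangle _ _ _
      _ ≤ (2 : ℝ) ^ (ℓ + 1) - 2 ^ (n - 1 + 1) := by rw [sub_add_cancel]; linarith

lemma exists_mem_dist_le {ℓ ℓ' : ℤ} (hℓ : ℓ ≤ ct.lmax) (hℓ' : ℓ' ≤ ℓ) (hmin : ct.lmin ≤ ℓ')
    {u : X} (hu : u ∈ ct.T ℓ') : ∃ v ∈ ct.T ℓ, dist u v ≤ (2 : ℝ) ^ (ℓ + 1) := by
  obtain ⟨v, hv, huv⟩ := ct.exists_mem_dist_le_sub hℓ ℓ' hℓ' hmin u hu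
  exact ⟨v, hv, huv.trans (sub_le_self _ (by positivity))⟩

end CoverTree

lemma Real.zpow_ceil_logb_lt {b x : ℝ} (hb : 1 < b) (hx : 0 < x) :
    b ^ ⌈Real.logb b x⌉ < b * x := by
  rw [← Real.rpow_intCast]
  calc b ^ (⌈Real.logb b x⌉ : ℝ) < b ^ (Real.logb b x + 1) :=
        Real.rpow_lt_rpow_of_exponent_lt hb (Int.ceil_lt_add_one _)
    _ = b * x := by
        rw [Real.rpow_add (by linarith), Real.rpow_logb (by linarith) hb.ne' hx, Real.rpow_one,
          mul_comm]

theorem stmt17_general {X : Type*} [MetricSpace X] {S : Set X} {D : ℕ} (hD : HasDoublingDim X D)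
    (ct : CoverTree X S)
    (k : ℕ)
    (ℓk : ℤ) (hℓk2 : ℓk ≤ ct.lmax)
    (hsmall : (ct.T ℓk).ncard ≤ k)
    (ε : ℝ) (hε1 : 0 < ε) (hε2 : ε ≤ 8)
    (hstar : ct.lmin ≤ ℓk - ⌈Real.logb 2 (8 / ε)⌉) :
    (ct.T (ℓk - ⌈Real.logb 2 (8 / ε)⌉)).ncard
        ≤ k * 2 ^ ((⌈Real.logb 2 (8 / ε)⌉.toNat + 2) * D) ∧
    ((k * 2 ^ ((⌈Real.logb 2 (8 / ε)⌉.toNat + 2) * D) : ℕ) : ℝ)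
        ≤ (k : ℝ) * (64 / ε) ^ D := by
  set m := ⌈Real.logb 2 (8 / ε)⌉.toNat
  have hm : (m : ℤ) = ⌈Real.logb 2 (8 / ε)⌉ :=
    Int.toNat_of_nonneg (Int.ceil_nonneg (Real.logb_nonneg one_lt_two ((one_le_div hε1).2 hε2)))
  have hpow := Real.zpow_ceil_logb_lt one_lt_two (div_pos (by norm_num : (0 : ℝ) < 8) hε1)
  rw [← hm, zpow_natCast] at hpow
  rw [← hm] at hstar ⊢
  constructor
  · have hsep : 2 * ((2 : ℝ) ^ (ℓk + 1) / 2 ^ (m + 2)) = 2 ^ (ℓk - m) := by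
      rw [← zpow_natCast, ← zpow_sub₀ two_ne_zero, ← zpow_one_add₀ two_ne_zero]
      congr 1; push_cast; ring
    refine (hD.ncard_le_of_separated (ct.T_finite ℓk (by omega) hℓk2) (by positivity) (m + 2)
      (fun u hu => ct.exists_mem_dist_le hℓk2 (by omega) hstar hu) ?_).trans
      (Nat.mul_le_mul_right _ hsmall)
    rw [hsep]
    exact ct.separated _ hstar (by omega)
  · have h64 : (2 : ℝ) ^ (m + 2) ≤ 64 / ε := by
      calc (2 : ℝ) ^ (m + 2) = 2 ^ m * 4 := by rw [pow_add]; norm_num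
        _ ≤ 2 * (8 / ε) * 4 := by gcongr
        _ = 64 / ε := by ring
    push_cast
    rw [pow_mul]
    gcongr

/-- Coreset size bound: in a metric space of doubling dimension `D`, if `|T ℓ(k)| ≤ k`,
`0 < ε ≤ 8`, and `ℓ* = ℓ(k) − ⌈log₂(8/ε)⌉ ≥ lmin`, then
`|T ℓ*| ≤ k · 2^{(⌈log₂(8/ε)⌉+2)·D} ≤ k · (64/ε)^D`. -/
theorem stmt17 {X : Type*} [MetricSpace X] {S : Set X} {D : ℕ} (hD : HasDoublingDim X D)
    (ct : CoverTree X S)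
    (k : ℕ) (hk : 1 ≤ k)
    (ℓk : ℤ) (hℓk1 : ct.lmin ≤ ℓk) (hℓk2 : ℓk ≤ ct.lmax)
    (hsmall : (ct.T ℓk).ncard ≤ k)
    (ε : ℝ) (hε1 : 0 < ε) (hε2 : ε ≤ 8)
    (hstar : ct.lmin ≤ ℓk - ⌈Real.logb 2 (8 / ε)⌉) :
    (ct.T (ℓk - ⌈Real.logb 2 (8 / ε)⌉)).ncard
        ≤ k * 2 ^ ((⌈Real.logb 2 (8 / ε)⌉.toNat + 2) * D) ∧
    ((k * 2 ^ ((⌈Real.logb 2 (8 / ε)⌉.toNat + 2) * D) : ℕ) : ℝ)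
        ≤ (k : ℝ) * (64 / ε) ^ D :=
  stmt17_general hD ct k ℓk hℓk2 hsmall ε hε1 hε2 hstar
end

section
/- Matroid substitution along a partition: let M be a matroid on a finite ground set S, let S₁, …, S_h be a partition of S, and for each i let B_i be a maximal independent subset of S_i. Then for every independent set A of M there exist an independent set A' ⊆ ⋃_{i=1}^h B_i and a bijection f : A → A' such that for every a ∈ A, the points a and f(a) belong to the same part S_i of the partition. -/
/-! Repeatedly exchange a point `a ∈ A` lying outside `⋃ i, B i`, say `a ∈ S_i`, for a point
`b ∈ B_i`: since `a ∈ cl(B_i)` but `a ∉ cl(A - a)`, some `b ∈ B_i` lies outside `cl(A - a)`,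
so `A - a + b` is again independent. Points already in `⋃ i, B i` are never moved again, so
every point ends up paired with a point of its own part, and the process stops after
`|A \ ⋃ i, B i|` steps. -/

open Set Function

theorem Set.injOn_update_insert_and_image_eq {α β : Type*} [DecidableEq α] {f : α → β}
    {s : Set α} {a b : α} (ha : a ∉ s) (hb : b ∉ s) (hf : InjOn f (insert b s)) :
    InjOn (update f a (f b)) (insert a s) ∧ update f a (f b) '' insert a s = f '' insert b s := by
  have heq : EqOn (update f a (f b)) f s := fun x hx =>
    update_of_ne (ne_of_mem_of_not_mem hx ha) _ _
  rw [injOn_insert hb] at hf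
  rw [injOn_insert ha, image_insert_eq, image_insert_eq, update_self, heq.image_eq, heq.injOn_iff]
  exact ⟨hf, rfl⟩

namespace Matroid

variable {α : Type*} {M : Matroid α} {I B Y : Set α} {a : α}

theorem Indep.exists_insert_sdiff_indep_of_isBasis (hI : M.Indep I) (haI : a ∈ I)
    (hB : M.IsBasis B Y) (haY : a ∈ Y) (haB : a ∉ B) :
    ∃ b ∈ B \ I, M.Indep (insert b (I \ {a})) := by
  obtain ⟨b, hbB, hb⟩ := not_subset.1 fun h : B ⊆ M.closure (I \ {a}) =>
    hI.notMem_closure_sdiff_of_mem haI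
      (M.closure_subset_closure_of_subset_closure h (hB.subset_closure haY))
  have hbI : b ∉ I := fun hbI => hb <| M.mem_closure_of_mem'
    ⟨hbI, by rintro rfl; exact haB hbB⟩ (hI.subset_ground hbI)
  exact ⟨b, ⟨hbB, hbI⟩, ((hI.sdiff {a}).insert_indep_iff_of_notMem fun h => hbI h.1).2
    ⟨hB.indep.subset_ground hbB, hb⟩⟩

theorem Indep.exists_injOn_of_exchange {X : Set α} {r : α → α → Prop}
    (hex : ∀ J, M.Indep J → ∀ a ∈ J \ X,
      ∃ b ∈ X \ J, r a b ∧ M.Indep (insert b (J \ {a})))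
    (hI : M.Indep I) (hfin : (I \ X).Finite) :
    ∃ f : α → α, InjOn f I ∧ f '' I ⊆ X ∧ M.Indep (f '' I) ∧ EqOn f id (I ∩ X) ∧
      ∀ a ∈ I \ X, r a (f a) := by
  classical
  obtain ⟨n, hn⟩ : ∃ n, (I \ X).ncard = n := ⟨_, rfl⟩
  induction n generalizing I with
  | zero =>
    have hIX : I ⊆ X := sdiff_eq_empty.1 ((ncard_eq_zero hfin).1 hn)
    exact ⟨id, injOn_id I, by rwa [image_id], by rwa [image_id], fun _ _ => rfl,
      fun a ha => absurd (hIX ha.1) ha.2⟩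
  | succ n ih =>
    obtain ⟨a, ha⟩ : (I \ X).Nonempty := nonempty_of_ncard_ne_zero (by omega)
    obtain ⟨b, hb, hrab, hJ⟩ := hex I hI a ha
    have hJX : insert b (I \ {a}) \ X = (I \ X) \ {a} := by
      rw [insert_sdiff_of_mem _ hb.1, sdiff_sdiff_comm]
    obtain ⟨g, hginj, hgX, hgind, hgid, hgr⟩ := ih hJ (hJX ▸ hfin.sdiff)
      (by rw [hJX, ncard_sdiff_singleton_of_mem ha, hn]; rfl)
    have hgb : g b = b := hgid ⟨mem_insert _ _, hb.1⟩
    obtain ⟨hinj, himage⟩ :=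
      injOn_update_insert_and_image_eq (notMem_sdiff_of_mem (mem_singleton a))
        (fun h => hb.2 h.1) hginj
    rw [insert_sdiff_singleton, insert_eq_of_mem ha.1] at hinj himage
    refine ⟨update g a (g b), hinj, himage ▸ hgX, himage ▸ hgind, ?_, ?_⟩
    · rintro x ⟨hxI, hxX⟩
      have hxa : x ≠ a := by rintro rfl; exact ha.2 hxX
      rw [update_of_ne hxa]
      exact hgid ⟨mem_insert_of_mem _ ⟨hxI, hxa⟩, hxX⟩
    · rintro x ⟨hxI, hxX⟩
      obtain rfl | hxa := eq_or_ne x a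
      · rwa [update_self, hgb]
      · rw [update_of_ne hxa]
        exact hgr x ⟨mem_insert_of_mem _ ⟨hxI, hxa⟩, hxX⟩

end Matroid

theorem stmt18_general {α : Type*} (M : Matroid α) (hfin : M.E.Finite)
    (h : ℕ) (Sp : Fin h → Set α)
    (hcover : (⋃ i, Sp i) = M.E)
    (B : Fin h → Set α)
    (hBsub : ∀ i, B i ⊆ Sp i)
    (hBind : ∀ i, M.Indep (B i))
    (hBmax : ∀ i, ∀ B'' : Set α, M.Indep B'' → B i ⊆ B'' → B'' ⊆ Sp i → B'' = B i)
    (A : Set α) (hA : M.Indep A) :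
    ∃ A' : Set α, A' ⊆ (⋃ i, B i) ∧ M.Indep A' ∧
      ∃ f : α → α, Set.BijOn f A A' ∧
        ∀ a ∈ A, ∃ i : Fin h, a ∈ Sp i ∧ f a ∈ Sp i := by
  have hpart : ∀ x ∈ M.E, ∃ i, x ∈ Sp i := fun x hx => mem_iUnion.1 (hcover ▸ hx)
  have hbasis : ∀ i, M.IsBasis (B i) (Sp i) := fun i =>
    (Matroid.isBasis_iff (hcover ▸ subset_iUnion Sp i)).2
      ⟨hBind i, hBsub i, fun J hJ hBJ hJS => (hBmax i J hJ hBJ hJS).symm⟩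
  have hex : ∀ J, M.Indep J → ∀ a ∈ J \ ⋃ i, B i, ∃ b ∈ (⋃ i, B i) \ J,
      (∃ i, a ∈ Sp i ∧ b ∈ Sp i) ∧ M.Indep (insert b (J \ {a})) := by
    rintro J hJ a ⟨haJ, haB⟩
    obtain ⟨i, hai⟩ := hpart a (hJ.subset_ground haJ)
    obtain ⟨b, ⟨hbB, hbJ⟩, hb⟩ := hJ.exists_insert_sdiff_indep_of_isBasis haJ (hbasis i) hai
      fun h => haB (mem_iUnion_of_mem i h)
    exact ⟨b, ⟨mem_iUnion_of_mem i hbB, hbJ⟩, ⟨i, hai, hBsub i hbB⟩, hb⟩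
  obtain ⟨f, hinj, hfB, hind, hfix, hfpart⟩ :=
    hA.exists_injOn_of_exchange hex ((hfin.subset hA.subset_ground).sdiff)
  refine ⟨f '' A, hfB, hind, f, hinj.bijOn_image, fun a ha => ?_⟩
  by_cases haB : a ∈ ⋃ i, B i
  · obtain ⟨i, hai⟩ := hpart a (hA.subset_ground ha)
    exact ⟨i, hai, (hfix ⟨ha, haB⟩).symm ▸ hai⟩
  · exact hfpart a ⟨ha, haB⟩

/-- Matroid substitution along a partition: if `S₁, …, S_h` is a partition of the ground
set of `M` and each `B_i` is a maximal independent subset of `S_i`, then every independent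
set `A` can be replaced by an independent set `A' ⊆ ⋃ i, B_i` via a bijection `f : A → A'`
mapping each point to a point in the same part of the partition. -/
theorem stmt18 {α : Type*} (M : Matroid α) (hfin : M.E.Finite)
    (h : ℕ) (Sp : Fin h → Set α)
    (hdisj : ∀ i j, i ≠ j → Disjoint (Sp i) (Sp j))
    (hcover : (⋃ i, Sp i) = M.E)
    (B : Fin h → Set α)
    (hBsub : ∀ i, B i ⊆ Sp i)
    (hBind : ∀ i, M.Indep (B i))
    (hBmax : ∀ i, ∀ B'' : Set α, M.Indep B'' → B i ⊆ B'' → B'' ⊆ Sp i → B'' = B i)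
    (A : Set α) (hA : M.Indep A) :
    ∃ A' : Set α, A' ⊆ (⋃ i, B i) ∧ M.Indep A' ∧
      ∃ f : α → α, Set.BijOn f A A' ∧
        ∀ a ∈ A, ∃ i : Fin h, a ∈ Sp i ∧ f a ∈ Sp i :=
  stmt18_general M hfin h Sp hcover B hBsub hBind hBmax A hA
end
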